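/- Let τ be even with 0 < τ < n. Then every edge of the graph H_n(τ) joins two strings of equal parity, and for each c ∈ ZMod 2 the subgraph of H_n(τ) induced on the parity class {μ ∈ E_n : π(μ) = c} is connected; thus H_n(τ) consists of exactly two connected components, with vertex sets the even-parity strings and the odd-parity strings. -/

import Mathlib

/-- The parity of a binary string: the sum of its digits in `ZMod 2`. -/
def parity {n : ℕ} (μ : Fin n → ZMod 2) : ZMod 2 := ∑ i, μ i

/-- `H_n(τ)`: the simple graph on binary strings of length `n` in which two
distinct strings are adjacent iff their Hamming distance is `τ`. -/
def hammingGraph (n τ : ℕ) : SimpleGraph (Fin n → ZMod 2) where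
  Adj μ ν := μ ≠ ν ∧ hammingDist μ ν = τ
  symm := by
    constructor
    intro μ ν h
    exact ⟨h.1.symm, by rw [hammingDist_comm]; exact h.2⟩
  loopless := ⟨fun μ h => h.1 rfl⟩

namespace HammingAux

variable {n : ℕ}

/-- Flip the bits of `μ` on the set `S`. -/
def flipS (S : Finset (Fin n)) (μ : Fin n → ZMod 2) : Fin n → ZMod 2 :=
  fun i => μ i + if i ∈ S then 1 else 0

lemma flipS_ne_iff (S : Finset (Fin n)) (μ : Fin n → ZMod 2) (i : Fin n) :
    flipS S μ i ≠ μ i ↔ i ∈ S := by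
  unfold flipS
  by_cases h : i ∈ S <;> simp [h]

lemma hammingDist_flipS (S : Finset (Fin n)) (μ : Fin n → ZMod 2) :
    hammingDist (flipS S μ) μ = S.card := by
  show (Finset.univ.filter fun i => flipS S μ i ≠ μ i).card = S.card
  congr 1
  ext i
  simp [flipS_ne_iff]

lemma parity_flipS (S : Finset (Fin n)) (μ : Fin n → ZMod 2) :
    parity (flipS S μ) = parity μ + S.card := by
  unfold parity flipS
  rw [Finset.sum_add_distrib]
  congr 1
  rw [Finset.sum_ite_mem, Finset.univ_inter, Finset.sum_const, nsmul_eq_mul, mul_one]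

lemma parity_add_parity (μ ν : Fin n → ZMod 2) :
    parity μ + parity ν = (hammingDist μ ν : ZMod 2) := by
  show _ = ((Finset.univ.filter fun i => μ i ≠ ν i).card : ZMod 2)
  rw [Finset.card_filter]
  unfold parity
  rw [← Finset.sum_add_distrib, Nat.cast_sum]
  apply Finset.sum_congr rfl
  intro i _
  have h : ∀ a b : ZMod 2, a + b = if a ≠ b then 1 else 0 := by decide
  rw [h]
  by_cases hab : μ i = ν i <;> simp [hab]

lemma even_cast_zmod2 {τ : ℕ} (h : Even τ) : (τ : ZMod 2) = 0 := by
  rw [ZMod.natCast_eq_zero_iff]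
  exact h.two_dvd

variable {τ : ℕ}

lemma adj_flipS (hτ0 : 0 < τ) (μ : Fin n → ZMod 2) (S : Finset (Fin n))
    (hS : S.card = τ) : (hammingGraph n τ).Adj (flipS S μ) μ := by
  show _ ≠ _ ∧ _
  refine ⟨?_, by rw [hammingDist_flipS, hS]⟩
  intro h
  have : hammingDist (flipS S μ) μ = 0 := by rw [h, hammingDist_self]
  rw [hammingDist_flipS, hS] at this
  omega

/-- The two-step lemma: flipping two bits keeps us in the same component of the
induced subgraph on a parity class. -/
lemma twostep (hτeven : Even τ) (hτ0 : 0 < τ) (hτn : τ < n) (c : ZMod 2)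
    (μ : Fin n → ZMod 2) (hμ : parity μ = c) (i j : Fin n) (hij : i ≠ j)
    (hν : parity (flipS {i, j} μ) = c) :
    ((hammingGraph n τ).induce {μ : Fin n → ZMod 2 | parity μ = c}).Reachable
      ⟨μ, hμ⟩ ⟨flipS {i, j} μ, hν⟩ := by
  -- choose S with i ∈ S ⊆ univ.erase j, |S| = τ
  obtain ⟨S, hiS, hSj, hScard⟩ :=
    Finset.exists_subsuperset_card_eq (s := {i}) (t := Finset.univ.erase j) (n := τ)
      (by simp [Finset.mem_erase, hij]) (by simp; omega)
      (by simp [Finset.card_erase_of_mem]; omega)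
  have hiS : i ∈ S := hiS (Finset.mem_singleton_self i)
  have hjS : j ∉ S := fun h => by simpa using (hSj h)
  have hσ : parity (flipS S μ) = c := by
    rw [parity_flipS, hScard, even_cast_zmod2 hτeven, add_zero, hμ]
  have h1 : (hammingGraph n τ).Adj μ (flipS S μ) :=
    ((adj_flipS hτ0 μ S hScard)).symm
  have hdiff : symmDiff S ({i, j} : Finset (Fin n)) = insert j (S.erase i) := by
    ext x
    simp only [Finset.mem_symmDiff, Finset.mem_insert, Finset.mem_erase,
      Finset.mem_singleton]
    constructor
    · rintro (⟨hxS, hx⟩ | ⟨hx, hxS⟩)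
      · exact Or.inr ⟨fun h => hx (Or.inl h), hxS⟩
      · rcases hx with rfl | rfl
        · exact absurd hiS hxS
        · exact Or.inl rfl
    · rintro (rfl | ⟨hxi, hxS⟩)
      · exact Or.inr ⟨Or.inr rfl, hjS⟩
      · exact Or.inl ⟨hxS, by rintro (rfl | rfl) <;> [exact hxi rfl; exact hjS hxS]⟩
  have h2 : (hammingGraph n τ).Adj (flipS S μ) (flipS {i, j} μ) := by
    have hdist : hammingDist (flipS S μ) (flipS {i, j} μ) = τ := by
      show (Finset.univ.filter fun x => flipS S μ x ≠ flipS {i,j} μ x).card = τ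
      have : (Finset.univ.filter fun x => flipS S μ x ≠ flipS {i,j} μ x)
          = symmDiff S {i, j} := by
        ext x
        simp only [Finset.mem_filter, Finset.mem_univ, true_and, flipS,
          Finset.mem_symmDiff]
        by_cases h1 : x ∈ S <;> by_cases h2 : x ∈ ({i, j} : Finset (Fin n)) <;>
          simp [h1, h2] <;> simp at h2 <;> tauto
      rw [this, hdiff, Finset.card_insert_of_notMem (by simp [hjS]),
        Finset.card_erase_of_mem hiS, hScard]
      omega
    show _ ≠ _ ∧ _
    refine ⟨?_, hdist⟩
    intro h
    rw [h, hammingDist_self] at hdist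
    omega
  have w1 : ((hammingGraph n τ).induce {μ : Fin n → ZMod 2 | parity μ = c}).Adj
      ⟨μ, hμ⟩ ⟨flipS S μ, hσ⟩ := h1
  have w2 : ((hammingGraph n τ).induce {μ : Fin n → ZMod 2 | parity μ = c}).Adj
      ⟨flipS S μ, hσ⟩ ⟨flipS {i, j} μ, hν⟩ := h2
  exact (w1.reachable).trans w2.reachable

lemma reach (hτeven : Even τ) (hτ0 : 0 < τ) (hτn : τ < n) (c : ZMod 2) :
    ∀ d (μ ν : Fin n → ZMod 2) (hμ : parity μ = c) (hν : parity ν = c),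
      hammingDist μ ν ≤ d →
      ((hammingGraph n τ).induce {μ : Fin n → ZMod 2 | parity μ = c}).Reachable
        ⟨μ, hμ⟩ ⟨ν, hν⟩ := by
  intro d
  induction d with
  | zero =>
    intro μ ν hμ hν hd
    have : μ = ν := by
      have := Nat.le_zero.mp hd
      rwa [hammingDist_eq_zero] at this
    subst this
    exact SimpleGraph.Reachable.refl _
  | succ d ih =>
    intro μ ν hμ hν hd
    by_cases h0 : hammingDist μ ν = 0
    · have : μ = ν := by rwa [hammingDist_eq_zero] at h0
      subst this
      exact SimpleGraph.Reachable.refl _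
    · set D := Finset.univ.filter fun x => μ x ≠ ν x with hD
      have hDcard : D.card = hammingDist μ ν := rfl
      have hzero : (D.card : ZMod 2) = 0 := by
        rw [hDcard, ← parity_add_parity, hμ, hν]
        exact CharTwo.add_self_eq_zero c
      have hdvd : 2 ∣ D.card := (ZMod.natCast_eq_zero_iff D.card 2).mp hzero
      have hDne : D.card ≠ 0 := by rw [hDcard]; exact h0
      have hD2 : 2 ≤ D.card := by
        obtain ⟨k, hk⟩ := hdvd
        omega
      have hDpos : 0 < D.card := by omega
      obtain ⟨i, hiD⟩ := Finset.card_pos.mp hDpos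
      have : (D.erase i).Nonempty := Finset.card_pos.mp (by
        rw [Finset.card_erase_of_mem hiD]; omega)
      obtain ⟨j, hjD⟩ := this
      have hji : j ≠ i := (Finset.mem_erase.mp hjD).1
      have hjD : j ∈ D := (Finset.mem_erase.mp hjD).2
      have hiμν : μ i ≠ ν i := by
        have := Finset.mem_filter.mp hiD; exact this.2
      have hjμν : μ j ≠ ν j := by
        have := Finset.mem_filter.mp hjD; exact this.2
      set μ' := flipS {i, j} μ with hμ'
      have hcard2 : ({i, j} : Finset (Fin n)).card = 2 := by
        rw [Finset.card_insert_of_notMem (by simp [hji.symm]), Finset.card_singleton]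
      have hμ'par : parity μ' = c := by
        rw [hμ', parity_flipS, hcard2, hμ]
        have h20 : ((2 : ℕ) : ZMod 2) = 0 := by decide
        rw [h20, add_zero]
      -- diff set of μ' and ν is D \ {i, j}
      have hfilter : (Finset.univ.filter fun x => μ' x ≠ ν x)
          = D \ {i, j} := by
        ext x
        simp only [Finset.mem_filter, Finset.mem_univ, true_and, hD,
          Finset.mem_sdiff, Finset.mem_insert, Finset.mem_singleton]
        rw [hμ']
        unfold flipS
        by_cases hx : x ∈ ({i, j} : Finset (Fin n))
        · rcases Finset.mem_insert.mp hx with rfl | hx'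
          · simp only [hx, if_pos]
            constructor
            · intro h
              exfalso
              apply h
              revert hiμν; generalize μ x = a; generalize ν x = b
              revert a b; decide
            · rintro ⟨_, h2⟩; simp at h2
          · rw [Finset.mem_singleton] at hx'
            subst hx'
            simp only [hx, if_pos]
            constructor
            · intro h
              exfalso
              apply h
              revert hjμν; generalize μ x = a; generalize ν x = b
              revert a b; decide
            · rintro ⟨_, h2⟩; simp at h2
        · have hx' : ¬(x = i ∨ x = j) := by
            intro h; apply hx; simpa using h
          simp [hx, hx']
      have hdist' : hammingDist μ' ν ≤ d := by
        show (Finset.univ.filter fun x => μ' x ≠ ν x).card ≤ d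
        rw [hfilter, Finset.card_sdiff_of_subset (by
          intro x hx
          rcases Finset.mem_insert.mp hx with rfl | hx'
          · exact hiD
          · rw [Finset.mem_singleton] at hx'; subst hx'; exact hjD)]
        rw [hcard2, hDcard]
        omega
      exact (twostep hτeven hτ0 hτn c μ hμ i j (fun h => hji h.symm) hμ'par).trans
        (ih μ' ν hμ'par hν hdist')

end HammingAux

theorem hammingGraph_two_components_of_even (n τ : ℕ) (hτeven : Even τ)
    (hτ0 : 0 < τ) (hτn : τ < n) :
    (∀ μ ν : Fin n → ZMod 2, (hammingGraph n τ).Adj μ ν → parity μ = parity ν) ∧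
      ∀ c : ZMod 2,
        ((hammingGraph n τ).induce {μ : Fin n → ZMod 2 | parity μ = c}).Connected := by
  constructor
  · rintro μ ν (⟨hne, hd⟩ : μ ≠ ν ∧ _)
    have h := HammingAux.parity_add_parity μ ν
    rw [hd, HammingAux.even_cast_zmod2 hτeven] at h
    have h2 : parity μ + parity ν + parity ν = parity ν := by rw [h, zero_add]
    rwa [add_assoc, CharTwo.add_self_eq_zero, add_zero] at h2
  · intro c
    have hn : 0 < n := by omega
    haveI : Nonempty ↑{μ : Fin n → ZMod 2 | parity μ = c} := by
      refine ⟨⟨fun i => if i = ⟨0, hn⟩ then c else 0, ?_⟩⟩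
      show parity _ = c
      unfold parity
      simp [Finset.sum_ite_eq']
    constructor
    rintro ⟨μ, hμ⟩ ⟨ν, hν⟩
    exact HammingAux.reach hτeven hτ0 hτn c (hammingDist μ ν) μ ν hμ hν le_rfl
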